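/- arXiv:1501.02575 — 4 statements merged into one kernel-verified Lean document; each statement's English description precedes it below -/
import Mathlib

section
/- Let F : (0,1) → ℝ be a continuous function satisfying F(1-x) + F(y/(1-x)) = F(y) + F(1 - x/(1-y)) for all x, y ∈ (0,1) with x + y ∈ (0,1). Then F is constant. -/
/-!
Substituting `x = 1 - s`, `y = s t` turns the equation into
`F s + F t = F (s t) + F (s (1 - t) / (1 - s t))`. Everything except the last term is symmetric in
`s` and `t`, so `F (s (1 - t) / (1 - s t)) = F (t (1 - s) / (1 - s t))`. The map
`(s, t) ↦ (s (1 - t) / (1 - s t), t (1 - s) / (1 - s t))` sends `(0,1)²` onto the open triangle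
`a, b > 0, a + b < 1`, hence `F a = F b` whenever `a + b < 1`, and any two points of `(0,1)` are
linked through a third point that is small enough.
-/

open Set

variable {G : Type*} [AddCancelCommMonoid G]

def IsInfoEquationSolution (F : ℝ → G) : Prop :=
  ∀ x ∈ Ioo (0:ℝ) 1, ∀ y ∈ Ioo (0:ℝ) 1, x + y ∈ Ioo (0:ℝ) 1 →
    F (1 - x) + F (y / (1 - x)) = F y + F (1 - x / (1 - y))

namespace IsInfoEquationSolution

variable {F : ℝ → G} (hF : IsInfoEquationSolution F)
include hF

theorem add_eq_map_mul_add {s t : ℝ} (hs : s ∈ Ioo (0:ℝ) 1) (ht : t ∈ Ioo (0:ℝ) 1) :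
    F s + F t = F (s * t) + F (s * (1 - t) / (1 - s * t)) := by
  obtain ⟨hs0, hs1⟩ := hs
  obtain ⟨ht0, ht1⟩ := ht
  have hst0 : 0 < s * t := mul_pos hs0 ht0
  have hst : s * t < s := mul_lt_of_lt_one_right hs0 ht1
  have h := hF (1 - s) ⟨by linarith, by linarith⟩ (s * t) ⟨hst0, by linarith⟩
    ⟨by linarith, by linarith⟩
  have hne : 1 - s * t ≠ 0 := by linarith
  have h₁ : s * t / s = t := by field_simp
  have h₂ : 1 - (1 - s) / (1 - s * t) = s * (1 - t) / (1 - s * t) := by field_simp; ring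
  rwa [sub_sub_cancel, h₁, h₂] at h

theorem map_mul_one_sub_div_comm {s t : ℝ} (hs : s ∈ Ioo (0:ℝ) 1) (ht : t ∈ Ioo (0:ℝ) 1) :
    F (s * (1 - t) / (1 - s * t)) = F (t * (1 - s) / (1 - s * t)) := by
  have h := hF.add_eq_map_mul_add ht hs
  rw [add_comm, hF.add_eq_map_mul_add hs ht, mul_comm t s] at h
  exact add_left_cancel h

theorem map_eq_of_add_lt_one {a b : ℝ} (ha : 0 < a) (hb : 0 < b) (hab : a + b < 1) :
    F a = F b := by
  have h1a : 0 < 1 - a := by linarith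
  have h1b : 0 < 1 - b := by linarith
  have h1ab : 1 - a - b ≠ 0 := by linarith
  -- `(a / (1 - b), b / (1 - a))` is the preimage of `(a, b)` under the map of the header.
  have hs : a / (1 - b) ∈ Ioo (0:ℝ) 1 := ⟨by positivity, (div_lt_one h1b).mpr (by linarith)⟩
  have ht : b / (1 - a) ∈ Ioo (0:ℝ) 1 := ⟨by positivity, (div_lt_one h1a).mpr (by linarith)⟩
  have hden : 1 - a / (1 - b) * (b / (1 - a)) = (1 - a - b) / ((1 - a) * (1 - b)) := by
    field_simp; ring
  have hfst : a / (1 - b) * (1 - b / (1 - a)) / (1 - a / (1 - b) * (b / (1 - a))) = a := by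
    rw [hden]; field_simp
  have hsnd : b / (1 - a) * (1 - a / (1 - b)) / (1 - a / (1 - b) * (b / (1 - a))) = b := by
    rw [hden]; field_simp; ring
  simpa only [hfst, hsnd] using hF.map_mul_one_sub_div_comm hs ht

theorem exists_const : ∃ c : G, ∀ x ∈ Ioo (0:ℝ) 1, F x = c := by
  refine ⟨F (1 / 4), fun x ⟨hx0, hx1⟩ => ?_⟩
  calc F x = F ((1 - x) / 2) := hF.map_eq_of_add_lt_one hx0 (by linarith) (by linarith)
    _ = F (1 / 4) := hF.map_eq_of_add_lt_one (by linarith) (by norm_num) (by linarith)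

end IsInfoEquationSolution

theorem lfconst_dim_one_general (F : ℝ → ℝ)
    (heq : ∀ x ∈ Set.Ioo (0:ℝ) 1, ∀ y ∈ Set.Ioo (0:ℝ) 1, x + y ∈ Set.Ioo (0:ℝ) 1 →
      F (1 - x) + F (y / (1 - x)) = F y + F (1 - x / (1 - y))) :
    ∃ c : ℝ, ∀ x ∈ Set.Ioo (0:ℝ) 1, F x = c :=
  IsInfoEquationSolution.exists_const heq

/-- Scalar specialization of Lemma `lfconst`: a continuous solution of the
single-function fundamental equation of information is constant. -/
theorem lfconst_dim_one (F : ℝ → ℝ) (hF : ContinuousOn F (Set.Ioo 0 1))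
    (heq : ∀ x ∈ Set.Ioo (0:ℝ) 1, ∀ y ∈ Set.Ioo (0:ℝ) 1, x + y ∈ Set.Ioo (0:ℝ) 1 →
      F (1 - x) + F (y / (1 - x)) = F y + F (1 - x / (1 - y))) :
    ∃ c : ℝ, ∀ x ∈ Set.Ioo (0:ℝ) 1, F x = c :=
  lfconst_dim_one_general F heq
end

section
/- Let n ≥ 1 and let f : {positive definite real symmetric n×n matrices} → ℝ be a continuous function satisfying f(X) + f(Y) = f(X^{1/2} · Y · X^{1/2}) for all positive definite symmetric X, Y, where X^{1/2} is the unique positive definite symmetric square root and · is matrix multiplication. Then there exists κ ∈ ℝ such that f(X) = κ · log(det X) for all positive definite X. -/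
/-! The equation says `f (P * X * P) = f (P * P) + f X` for positive definite `P`. Call `A`
congruence-additive if `f (A * X * Aᴴ) = f (A * Aᴴ) + f X` for all positive definite `X`; these
matrices are closed under products. A transvection `t` is a product of three positive definite
matrices, and `SL(n, ℝ)` is generated by transvections, so every matrix of determinant one is
congruence-additive. Hence `f` is invariant under conjugation by `SO(n)`, so by the spectral
theorem `f X` is a symmetric function of the eigenvalues of `X`. Finally `v ↦ f (diagonal (exp v))`
is additive, continuous and permutation invariant, hence a multiple of `∑ k, v k`. -/

open Matrix

open Classical in
/-- The unique positive semidefinite square root of a matrix (junk value `0`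
off the positive semidefinite cone). -/
noncomputable def msqrt {n : ℕ} (X : Matrix (Fin n) (Fin n) ℝ) : Matrix (Fin n) (Fin n) ℝ :=
  if h : X.PosSemidef then
    (h.1.eigenvectorUnitary : Matrix (Fin n) (Fin n) ℝ) *
      diagonal ((↑) ∘ (√·) ∘ h.1.eigenvalues) *
      (star h.1.eigenvectorUnitary : Matrix (Fin n) (Fin n) ℝ)
  else 0

lemma msqrt_eq_cfc {n : ℕ} {X : Matrix (Fin n) (Fin n) ℝ} (hX : X.PosSemidef) :
    msqrt X = cfc Real.sqrt X := by
  rw [msqrt, dif_pos hX, hX.1.cfc_eq, IsHermitian.cfc, Unitary.conjStarAlgAut_apply]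
  rfl

lemma msqrt_mul_self {n : ℕ} {P : Matrix (Fin n) (Fin n) ℝ} (hP : P.PosSemidef) :
    msqrt (P * P) = P := by
  have hspec : ∀ x ∈ spectrum ℝ P, √(x ^ 2) = x := by
    rw [hP.1.spectrum_real_eq_range_eigenvalues]
    rintro _ ⟨i, rfl⟩
    exact Real.sqrt_sq (hP.eigenvalues_nonneg i)
  rw [← sq, msqrt_eq_cfc (hP.pow 2), ← cfc_comp_pow _ 2 P (by fun_prop) hP.1.isSelfAdjoint,
    cfc_congr hspec, cfc_id' ℝ P hP.1.isSelfAdjoint]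

variable {ι : Type*} [Fintype ι] [DecidableEq ι]

lemma diagonal_mul_transvection {R : Type*} [CommRing R] (i j : ι) (c : R) (d : ι → R) :
    diagonal d * transvection i j (c * d j) = transvection i j (d i * c) * diagonal d := by
  ext a b
  simp only [transvection, diagonal_mul, mul_diagonal, Matrix.add_apply, one_apply, single_apply,
    mul_add, add_mul, mul_ite, ite_mul, mul_one, one_mul, mul_zero, zero_mul]
  grind

-- `diag(a, a⁻¹) = w(a) * w(-1)`, where `w(a) = t_ij(a) * t_ji(-a⁻¹) * t_ij(a)` acts on the
-- `(i, j)`-plane as `!![0, a; -a⁻¹, 0]`.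
lemma diag2n_eq_transvection_prod {K : Type*} [Field K] {i j : ι} (hij : i ≠ j) {a : K}
    (ha : a ≠ 0) :
    (SpecialLinearGroup.diag2n hij a ha : Matrix ι ι K) =
      transvection i j a * transvection j i (-a⁻¹) * transvection i j a *
        (transvection i j (-1) * transvection j i 1 * transvection i j (-1)) := by
  rw [SpecialLinearGroup.diag2n_coe]
  ext k l
  simp only [transvection, add_mul, mul_add, one_mul, mul_one, single_mul_single_same,
    single_mul_single_of_ne _ _ _ _ hij, single_mul_single_of_ne _ _ _ _ hij.symm, add_zero,
    Matrix.add_apply, one_apply, single_apply, diagonal_apply]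
  by_cases hk : k = i <;> by_cases hl : l = i <;> by_cases hk' : k = j <;> by_cases hl' : l = j <;>
    simp_all [eq_comm]

-- If `det U = -1`, flipping the sign of one column of `U` does not change `U D Uᴴ`.
lemma exists_det_eq_one_conj_diagonal_eq {U : Matrix ι ι ℝ} (hU : U * Uᴴ = 1) (d : ι → ℝ) :
    ∃ V : Matrix ι ι ℝ, V.det = 1 ∧ V * Vᴴ = 1 ∧ V * diagonal d * Vᴴ = U * diagonal d * Uᴴ := by
  have hdet : U.det * U.det = 1 := by simpa using congrArg det hU
  rcases isEmpty_or_nonempty ι with hι | ⟨⟨i₀⟩⟩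
  · exact ⟨U, det_isEmpty, hU, rfl⟩
  set s : ι → ℝ := fun k ↦ if k = i₀ then U.det else 1
  have hs : ∀ k, s k * s k = 1 := fun k ↦ by by_cases h : k = i₀ <;> simp [s, h, hdet]
  have hS : (diagonal s)ᴴ = diagonal s := by simp
  have hSS : diagonal s * diagonal s = 1 := by simp [hs]
  have hSdS : diagonal s * diagonal d * diagonal s = diagonal d := by
    simp only [diagonal_mul_diagonal, mul_right_comm _ (d _), hs, one_mul]
  refine ⟨U * diagonal s, ?_, ?_, ?_⟩
  · rw [det_mul, det_diagonal, Finset.prod_ite_eq' .., if_pos (Finset.mem_univ _), hdet]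
  · rw [conjTranspose_mul, hS, Matrix.mul_assoc, ← Matrix.mul_assoc (diagonal s), hSS,
      Matrix.one_mul, hU]
  · calc U * diagonal s * diagonal d * (U * diagonal s)ᴴ
        = U * (diagonal s * diagonal d * diagonal s) * Uᴴ := by
          simp only [conjTranspose_mul, hS, Matrix.mul_assoc]
      _ = U * diagonal d * Uᴴ := by rw [hSdS]

lemma exists_eq_mul_sum_of_perm_invariant {g : (ι → ℝ) → ℝ}
    (hadd : ∀ v w, g (v + w) = g v + g w) (hg : Continuous g)
    (hperm : ∀ (σ : Equiv.Perm ι) v, g (v ∘ σ) = g v) : ∃ κ, ∀ v, g v = κ * ∑ k, v k := by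
  let e : ι → ι → ℝ := fun i j ↦ if i = j then 1 else 0
  obtain ⟨κ, hκ⟩ : ∃ κ, ∀ i, g (e i) = κ := by
    rcases isEmpty_or_nonempty ι with hι | ⟨⟨i₀⟩⟩
    · exact ⟨0, isEmptyElim⟩
    refine ⟨g (e i₀), fun i ↦ ?_⟩
    rw [← hperm (Equiv.swap i₀ i) (e i₀)]
    congr 1
    funext j
    simp only [e, Function.comp_apply, eq_comm (a := i₀), Equiv.swap_apply_eq_iff,
      Equiv.swap_apply_left, eq_comm (a := j)]
  refine ⟨κ, fun v ↦ ?_⟩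
  have h : g v = ∑ k, v k * g (e k) := LinearMap.pi_apply_eq_sum_univ
    ((AddMonoidHom.mk' g hadd).toRealLinearMap hg : (ι → ℝ) →ₗ[ℝ] ℝ) v
  rw [h, Finset.mul_sum]
  exact Finset.sum_congr rfl fun k _ ↦ by rw [hκ, mul_comm]

section CongrAdditive

variable {f : Matrix ι ι ℝ → ℝ}

def IsCongrAdditive (f : Matrix ι ι ℝ → ℝ) (A : Matrix ι ι ℝ) : Prop :=
  IsUnit A ∧ ∀ X : Matrix ι ι ℝ, X.PosDef → f (A * X * Aᴴ) = f (A * Aᴴ) + f X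

lemma IsCongrAdditive.mul {A B : Matrix ι ι ℝ} (hA : IsCongrAdditive f A)
    (hB : IsCongrAdditive f B) : IsCongrAdditive f (A * B) := by
  refine ⟨hA.1.mul hB.1, fun X hX ↦ ?_⟩
  have hconj : ∀ Y : Matrix ι ι ℝ, Y.PosDef → (B * Y * Bᴴ).PosDef := fun Y hY ↦
    (Matrix.IsUnit.posDef_star_right_conjugate_iff hB.1).2 hY
  have hBB : (B * Bᴴ).PosDef := by simpa using hconj 1 .one
  calc f (A * B * X * (A * B)ᴴ) = f (A * (B * X * Bᴴ) * Aᴴ) := by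
        simp only [conjTranspose_mul, Matrix.mul_assoc]
    _ = f (A * Aᴴ) + (f (B * Bᴴ) + f X) := by rw [hA.2 _ (hconj X hX), hB.2 X hX]
    _ = f (A * (B * Bᴴ) * Aᴴ) + f X := by rw [hA.2 _ hBB, add_assoc]
    _ = f (A * B * (A * B)ᴴ) + f X := by simp only [conjTranspose_mul, Matrix.mul_assoc]

lemma IsCongrAdditive.apply_one (h : IsCongrAdditive f 1) : f 1 = 0 := by
  simpa using h.2 1 .one

variable (hPD : ∀ P : Matrix ι ι ℝ, P.PosDef → IsCongrAdditive f P)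
include hPD

-- `t = t⁻¹ t⁻ᴴ · tᴴ Λ t · Λ⁻¹` is a product of three positive definite matrices, as `Λ t Λ⁻¹ = t²`.
lemma isCongrAdditive_transvection {i j : ι} (hij : i ≠ j) (c : ℝ) :
    IsCongrAdditive f (transvection i j c) := by
  set t := transvection i j c
  set s := transvection i j (-c)
  set d : ι → ℝ := fun k ↦ if k = i then 2 else 1
  set Λ := diagonal d
  have hΛ : Λ.PosDef := .diagonal fun k ↦ by by_cases h : k = i <;> simp [d, h]
  have hst : s * t = 1 := by
    rw [transvection_mul_transvection_same _ _ hij, neg_add_cancel, transvection_zero]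
  have hts : t * s = 1 := by
    rw [transvection_mul_transvection_same _ _ hij, add_neg_cancel, transvection_zero]
  have hΛt : Λ * t = t * t * Λ := by
    rw [transvection_mul_transvection_same _ _ hij]
    simpa [d, hij.symm, two_mul] using diagonal_mul_transvection i j c d
  have hΛinv : Λ * Λ⁻¹ = 1 := mul_nonsing_inv _ ((isUnit_iff_isUnit_det _).1 hΛ.isUnit)
  have hdecomp : s * sᴴ * (tᴴ * Λ * t) * Λ⁻¹ = t := by
    have hst' : sᴴ * tᴴ = 1 := by rw [← conjTranspose_mul, hts, conjTranspose_one]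
    calc s * sᴴ * (tᴴ * Λ * t) * Λ⁻¹ = s * (sᴴ * tᴴ) * (Λ * t) * Λ⁻¹ := by
          simp only [Matrix.mul_assoc]
      _ = s * t * t * (Λ * Λ⁻¹) := by rw [hst', Matrix.mul_one, hΛt]; simp only [Matrix.mul_assoc]
      _ = t := by rw [hst, hΛinv, Matrix.one_mul, Matrix.mul_one]
  rw [← hdecomp]
  refine ((hPD _ ?_).mul (hPD _ ?_)).mul (hPD _ hΛ.inv)
  · exact .mul_conjTranspose_self s (vecMul_injective_iff_isUnit.2 ⟨⟨s, t, hst, hts⟩, rfl⟩)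
  · exact hΛ.conjTranspose_mul_mul_same (mulVec_injective_iff_isUnit.2 ⟨⟨t, s, hts, hst⟩, rfl⟩)

lemma isCongrAdditive_diag2n {i j : ι} (hij : i ≠ j) {a : ℝ} (ha : a ≠ 0) :
    IsCongrAdditive f (SpecialLinearGroup.diag2n hij a ha : Matrix ι ι ℝ) := by
  have ht := isCongrAdditive_transvection hPD hij
  have ht' := isCongrAdditive_transvection hPD hij.symm
  rw [diag2n_eq_transvection_prod]
  exact (((ht a).mul (ht' _)).mul (ht a)).mul (((ht _).mul (ht' 1)).mul (ht _))

lemma isCongrAdditive_of_det_eq_one {M : Matrix ι ι ℝ} (hM : M.det = 1) :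
    IsCongrAdditive f M := by
  refine diagonal_transvection_induction (IsCongrAdditive f) M (fun D hD ↦ ?_)
    (fun t ↦ isCongrAdditive_transvection hPD t.hij t.c) fun _ _ ↦ .mul
  rcases isEmpty_or_nonempty ι with hι | hι
  · rw [Subsingleton.elim (diagonal D) 1]
    exact hPD 1 .one
  obtain ⟨i₀⟩ := hι
  rw [hM] at hD
  change IsCongrAdditive f ((⟨diagonal D, hD⟩ : SpecialLinearGroup ι ℝ) : Matrix ι ι ℝ)
  rw [SpecialLinearGroup.diag_eq_diag2n_prod i₀ D hD]
  refine Finset.noncommProd_induction _ _ _ (fun g : SpecialLinearGroup ι ℝ ↦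
    IsCongrAdditive f (g : Matrix ι ι ℝ)) (fun _ _ ↦ .mul) (hPD 1 .one)
    fun k hk ↦ ?_
  rw [dif_pos (Finset.mem_filter.1 hk).2]
  exact isCongrAdditive_diag2n hPD _ _

lemma apply_conj_diagonal_of_mul_conjTranspose_eq_one {U : Matrix ι ι ℝ} (hU : U * Uᴴ = 1)
    {d : ι → ℝ} (hd : ∀ k, 0 < d k) : f (U * diagonal d * Uᴴ) = f (diagonal d) := by
  obtain ⟨V, hVdet, hV, hVd⟩ := exists_det_eq_one_conj_diagonal_eq hU d
  rw [← hVd, (isCongrAdditive_of_det_eq_one hPD hVdet).2 _ (.diagonal hd), hV,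
    (hPD 1 .one).apply_one, zero_add]

lemma apply_diagonal_comp_perm (σ : Equiv.Perm ι) {d : ι → ℝ} (hd : ∀ k, 0 < d k) :
    f (diagonal (d ∘ σ)) = f (diagonal d) := by
  have hP : σ.permMatrix ℝ * (σ.permMatrix ℝ)ᴴ = 1 := by
    rw [conjTranspose_permMatrix, ← permMatrix_mul, inv_mul_cancel, permMatrix_one]
  have hPd : σ.permMatrix ℝ * diagonal d * (σ.permMatrix ℝ)ᴴ = diagonal (d ∘ σ) := by
    rw [conjTranspose_permMatrix, PEquiv.toMatrix_toPEquiv_mul, PEquiv.mul_toMatrix_toPEquiv,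
      submatrix_submatrix, Equiv.Perm.inv_def, Equiv.symm_symm]
    exact submatrix_diagonal_equiv d σ
  rw [← hPd, apply_conj_diagonal_of_mul_conjTranspose_eq_one hPD hP hd]

lemma exists_apply_diagonal_eq_mul_log_prod (hf : ContinuousOn f {X | X.PosDef}) :
    ∃ κ, ∀ d : ι → ℝ, (∀ k, 0 < d k) → f (diagonal d) = κ * Real.log (∏ k, d k) := by
  let g : (ι → ℝ) → ℝ := fun v ↦ f (diagonal fun k ↦ Real.exp (v k))
  have hexp : ∀ v : ι → ℝ, (diagonal fun k ↦ Real.exp (v k)).PosDef :=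
    fun v ↦ .diagonal fun k ↦ Real.exp_pos _
  have hadd : ∀ v w, g (v + w) = g v + g w := by
    intro v w
    have h := (hPD _ (hexp fun k ↦ v k / 2)).2 _ (hexp w)
    simp only [diagonal_conjTranspose, star_trivial, diagonal_mul_diagonal, ← Real.exp_add] at h
    convert h using 5 <;> simp only [Pi.add_apply, add_halves]
    ring
  have hg : Continuous g := hf.comp_continuous (by fun_prop) hexp
  obtain ⟨κ, hκ⟩ := exists_eq_mul_sum_of_perm_invariant hadd hg
    fun σ v ↦ apply_diagonal_comp_perm hPD σ fun k ↦ Real.exp_pos (v k)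
  refine ⟨κ, fun d hd ↦ ?_⟩
  have hd' : f (diagonal d) = g fun k ↦ Real.log (d k) := by simp only [g, Real.exp_log (hd _)]
  rw [hd', hκ, Real.log_prod fun k _ ↦ (hd k).ne']

lemma exists_apply_eq_mul_log_det (hf : ContinuousOn f {X | X.PosDef}) :
    ∃ κ, ∀ X : Matrix ι ι ℝ, X.PosDef → f X = κ * Real.log X.det := by
  obtain ⟨κ, hκ⟩ := exists_apply_diagonal_eq_mul_log_prod hPD hf
  refine ⟨κ, fun X hX ↦ ?_⟩
  set U : Matrix ι ι ℝ := ↑hX.1.eigenvectorUnitary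
  have hU : U * Uᴴ = 1 := Unitary.mul_star_self_of_mem hX.1.eigenvectorUnitary.2
  have hXU : X = U * diagonal hX.1.eigenvalues * Uᴴ := by
    conv_lhs => rw [hX.1.spectral_theorem]
    simp [U, Unitary.conjStarAlgAut_apply, star_eq_conjTranspose]
  calc f X = f (diagonal hX.1.eigenvalues) := by
        conv_lhs => rw [hXU]
        exact apply_conj_diagonal_of_mul_conjTranspose_eq_one hPD hU hX.eigenvalues_pos
    _ = κ * Real.log X.det := by
        rw [hκ _ hX.eigenvalues_pos, hX.1.det_eq_prod_eigenvalues]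
        rfl

end CongrAdditive

theorem w1_logarithmic_continuous_general (n : ℕ)
    (f : Matrix (Fin n) (Fin n) ℝ → ℝ)
    (hf : ContinuousOn f {X | X.PosDef})
    (heq : ∀ X Y : Matrix (Fin n) (Fin n) ℝ, X.PosDef → Y.PosDef →
      f X + f Y = f (msqrt X * Y * msqrt X)) :
    ∃ κ : ℝ, ∀ X : Matrix (Fin n) (Fin n) ℝ, X.PosDef → f X = κ * Real.log X.det := by
  refine exists_apply_eq_mul_log_det (fun P hP ↦ ⟨hP.isUnit, fun X hX ↦ ?_⟩) hf
  have hPP : (P * P).PosDef := by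
    simpa only [hP.isHermitian.eq] using
      PosDef.mul_conjTranspose_self P (vecMul_injective_iff_isUnit.2 hP.isUnit)
  rw [hP.isHermitian.eq, heq _ X hPP hX, msqrt_mul_self hP.posSemidef]

/-- Continuous solution of the `w₁`-logarithmic Cauchy equation on positive
definite real symmetric matrices. -/
theorem w1_logarithmic_continuous (n : ℕ) (hn : 1 ≤ n)
    (f : Matrix (Fin n) (Fin n) ℝ → ℝ)
    (hf : ContinuousOn f {X | X.PosDef})
    (heq : ∀ X Y : Matrix (Fin n) (Fin n) ℝ, X.PosDef → Y.PosDef →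
      f X + f Y = f (msqrt X * Y * msqrt X)) :
    ∃ κ : ℝ, ∀ X : Matrix (Fin n) (Fin n) ℝ, X.PosDef → f X = κ * Real.log X.det :=
  w1_logarithmic_continuous_general n f hf heq
end

section
/- Fix n ≥ 1 and s = (s₁,...,sₙ) ∈ ℝⁿ. Define for a positive definite real symmetric n×n matrix X the generalized power function Δ_s(X) = Δ₁(X)^{s₁-s₂} · Δ₂(X)^{s₂-s₃} · ... · Δₙ(X)^{sₙ}, where Δ_k(X) is the k-th leading principal minor of X. Then f(X) = log Δ_s(X) satisfies f(T_X · Y · T_Xᵀ) = f(X) + f(Y) for all positive definite X, Y, where T_X is the lower triangular Cholesky factor of X with positive diagonal (X = T_X · T_Xᵀ). -/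
open Matrix

/-- The `k`-th leading principal minor of an `n × n` matrix. -/
noncomputable def pminor {n : ℕ} (X : Matrix (Fin n) (Fin n) ℝ) (k : ℕ) (hk : k ≤ n) : ℝ :=
  (X.submatrix (fun i : Fin k => Fin.castLE hk i) (fun i : Fin k => Fin.castLE hk i)).det

/-- The generalized power function `Δ_s(X) = ∏ₖ Δₖ(X)^(sₖ - sₖ₊₁)` (with `sₙ₊₁ = 0`). -/
noncomputable def gpower {n : ℕ} (s : Fin n → ℝ) (X : Matrix (Fin n) (Fin n) ℝ) : ℝ :=
  ∏ k : Fin n,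
    (pminor X ((k : ℕ) + 1) k.isLt) ^ (s k - if h : (k : ℕ) + 1 < n then s ⟨(k : ℕ) + 1, h⟩ else 0)

/-! If `L` is lower triangular, the leading `k × k` block of `L * Y * Lᵀ` is
`L_k * Y_k * L_kᵀ`, since row `i < k` of `L` vanishes beyond column `k`. Hence
`Δ_k (L Y Lᵀ) = Δ_k (L Lᵀ) Δ_k (Y)` for every `k`, so `Δ_s` is multiplicative along such
conjugations, and taking logarithms is legitimate because leading principal minors of positive
definite matrices are positive. -/

section LeadingBlock

variable {n k : ℕ} (hk : k ≤ n)

theorem submatrix_castLE_mul_of_lower_triangular {R ι : Type*} [NonUnitalNonAssocSemiring R]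
    {L : Matrix (Fin n) (Fin n) R} (hL : ∀ i j : Fin n, i < j → L i j = 0)
    (A : Matrix (Fin n) ι R) (c : Fin k → ι) :
    (L * A).submatrix (Fin.castLE hk) c =
      L.submatrix (Fin.castLE hk) (Fin.castLE hk) * A.submatrix (Fin.castLE hk) c := by
  ext i j
  refine (Fintype.sum_of_injective _ (Fin.castLE_injective hk) _
    (fun a => L (Fin.castLE hk i) a * A a (c j)) (fun a ha => ?_) fun _ => rfl).symm
  rw [Fin.range_castLE] at ha
  rw [hL _ _ ?_, zero_mul]
  exact Fin.lt_def.2 (lt_of_lt_of_le i.isLt (not_lt.1 ha))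

theorem submatrix_castLE_conj_of_lower_triangular {R : Type*} [NonUnitalCommSemiring R]
    {L : Matrix (Fin n) (Fin n) R} (hL : ∀ i j : Fin n, i < j → L i j = 0)
    (Y : Matrix (Fin n) (Fin n) R) :
    (L * Y * Lᵀ).submatrix (Fin.castLE hk) (Fin.castLE hk) =
      L.submatrix (Fin.castLE hk) (Fin.castLE hk) * Y.submatrix (Fin.castLE hk) (Fin.castLE hk) *
        (L.submatrix (Fin.castLE hk) (Fin.castLE hk))ᵀ := by
  rw [Matrix.mul_assoc, submatrix_castLE_mul_of_lower_triangular hk hL, Matrix.mul_assoc,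
    ← transpose_transpose (Y * Lᵀ), transpose_mul, transpose_transpose, ← transpose_submatrix,
    submatrix_castLE_mul_of_lower_triangular hk hL, transpose_mul, transpose_submatrix,
    transpose_transpose]

end LeadingBlock

theorem pminor_pos {n : ℕ} {X : Matrix (Fin n) (Fin n) ℝ} (hX : X.PosDef) (k : ℕ) (hk : k ≤ n) :
    0 < pminor X k hk :=
  (hX.submatrix (Fin.castLE_injective hk)).det_pos

theorem pminor_conj_of_lower_triangular {n : ℕ} {L : Matrix (Fin n) (Fin n) ℝ}
    (hL : ∀ i j : Fin n, i < j → L i j = 0) (Y : Matrix (Fin n) (Fin n) ℝ)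
    (k : ℕ) (hk : k ≤ n) :
    pminor (L * Y * Lᵀ) k hk = pminor (L * Lᵀ) k hk * pminor Y k hk := by
  have hLLt := submatrix_castLE_conj_of_lower_triangular hk hL 1
  rw [Matrix.mul_one, submatrix_one _ (Fin.castLE_injective hk), Matrix.mul_one] at hLLt
  simp only [pminor]
  rw [submatrix_castLE_conj_of_lower_triangular hk hL, hLLt, det_mul, det_mul, det_mul]
  ring

theorem gpower_pos {n : ℕ} (s : Fin n → ℝ) {X : Matrix (Fin n) (Fin n) ℝ} (hX : X.PosDef) :
    0 < gpower s X :=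
  Finset.prod_pos fun _ _ => Real.rpow_pos_of_pos (pminor_pos hX _ _) _

theorem gpower_conj_of_lower_triangular {n : ℕ} (s : Fin n → ℝ)
    {L Y : Matrix (Fin n) (Fin n) ℝ}
    (hL : ∀ i j : Fin n, i < j → L i j = 0) (hLLt : (L * Lᵀ).PosDef) (hY : Y.PosDef) :
    gpower s (L * Y * Lᵀ) = gpower s (L * Lᵀ) * gpower s Y := by
  simp only [gpower, ← Finset.prod_mul_distrib]
  refine Finset.prod_congr rfl fun _ _ => ?_
  rw [pminor_conj_of_lower_triangular hL,
    Real.mul_rpow (pminor_pos hLLt _ _).le (pminor_pos hY _ _).le]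

theorem log_gpower_w2_logarithmic_general (n : ℕ) (s : Fin n → ℝ)
    (X Y T : Matrix (Fin n) (Fin n) ℝ)
    (hX : X.PosDef) (hY : Y.PosDef)
    (hlow : ∀ i j : Fin n, i < j → T i j = 0)
    (hchol : X = T * Tᵀ) :
    Real.log (gpower s (T * Y * Tᵀ)) = Real.log (gpower s X) + Real.log (gpower s Y) := by
  subst hchol
  rw [gpower_conj_of_lower_triangular s hlow hX hY,
    Real.log_mul (gpower_pos s hX).ne' (gpower_pos s hY).ne']

/-- `log Δ_s` is `w₂`-logarithmic for the triangular (Cholesky) multiplication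
algorithm. -/
theorem log_gpower_w2_logarithmic (n : ℕ) (s : Fin n → ℝ)
    (X Y T : Matrix (Fin n) (Fin n) ℝ)
    (hX : X.PosDef) (hY : Y.PosDef)
    (hlow : ∀ i j : Fin n, i < j → T i j = 0)
    (hdiag : ∀ i : Fin n, 0 < T i i)
    (hchol : X = T * Tᵀ) :
    Real.log (gpower s (T * Y * Tᵀ)) = Real.log (gpower s X) + Real.log (gpower s Y) :=
  log_gpower_w2_logarithmic_general n s X Y T hX hY hlow hchol
end

section
/- Let f : {X positive definite real symmetric n×n, I - X positive definite} → ℝ be a continuous function satisfying f(I - X) + f((I-X)^{-1/2}·Y·(I-X)^{-1/2}) = f(Y) + f(I - (I-Y)^{-1/2}·X·(I-Y)^{-1/2}) for all positive definite symmetric X, Y with I - X - Y positive definite. Then f is constant. -/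
/-!
For commuting arguments the square roots in the equation cancel and it reads
`f (1 - X) + f (Y (1 - X)⁻¹) = f Y + f (1 - X (1 - Y)⁻¹)`. Given commuting `a, b > 0` with
`a + b < 1`, put `u = a (1 - b)⁻¹` and `v = b (1 - a)⁻¹`. The instances `(X, Y) = (1 - u, v u)`
and `(1 - v, u v)` share the first three terms `f u`, `f v`, `f (u v)`, while their last
terms are `f a` and `f b`; hence `f a = f b`. Two such steps, `X ~ (1 - X) / 2 ~ 1 / 4`, connect
every `X` to one fixed scalar matrix.
-/

open Matrix

open scoped MatrixOrder ComplexOrder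

namespace Matrix

variable {ι : Type*} [Fintype ι] [DecidableEq ι]

theorem commute_inv_right {α : Type*} [CommRing α] {A B : Matrix ι ι α} (h : Commute A B) :
    Commute A B⁻¹ := by
  by_cases hB : IsUnit B
  · simpa [coe_units_inv] using h.units_inv_right (u := hB.unit)
  · simp [nonsing_inv_eq_ringInverse, Ring.inverse_non_unit _ hB]

theorem one_sub_mul_inv_eq_mul {α : Type*} [CommRing α] {a b : Matrix ι ι α} (h : Commute a b)
    (hA : IsUnit (1 - a).det) (hB : IsUnit (1 - b).det) :
    1 - a * (1 - b)⁻¹ = (1 - a) * (1 - b * (1 - a)⁻¹ * (a * (1 - b)⁻¹)) := by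
  have hAv : (1 - a) * (b * (1 - a)⁻¹) = b := by
    rw [← mul_assoc, ((Commute.one_left b).sub_left h).eq, mul_nonsing_inv_cancel_right _ _ hA]
  have hBu : (1 - b) * (a * (1 - b)⁻¹) = a := by
    rw [← mul_assoc, ((Commute.one_left a).sub_left h.symm).eq,
      mul_nonsing_inv_cancel_right _ _ hB]
  calc 1 - a * (1 - b)⁻¹ = 1 - ((1 - b) + b) * (a * (1 - b)⁻¹) := by
        rw [sub_add_cancel, one_mul]
    _ = _ := by rw [mul_sub, mul_one, ← mul_assoc (1 - a), hAv, add_mul, hBu]; abel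

variable {𝕜 : Type*} [RCLike 𝕜] {A B : Matrix ι ι 𝕜}

theorem commute_sqrt_left (h : Commute A B) : Commute (CFC.sqrt A) B := by
  rw [CFC.sqrt_eq_cfc]
  exact h.cfc_nnreal _

theorem PosDef.isUnit_sqrt (hA : A.PosDef) : IsUnit (CFC.sqrt A) :=
  (CFC.isUnit_sqrt_iff A hA.posSemidef.nonneg).mpr hA.isUnit

theorem PosDef.mul_of_commute (hA : A.PosDef) (hB : B.PosDef) (h : Commute A B) :
    (A * B).PosDef := by
  have hs : (CFC.sqrt A)ᴴ = CFC.sqrt A := (CFC.sqrt_nonneg A).posSemidef.1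
  have : A * B = (CFC.sqrt A)ᴴ * B * CFC.sqrt A := by
    rw [hs, (commute_sqrt_left h).eq, mul_assoc, CFC.sqrt_mul_sqrt_self A hA.posSemidef.nonneg,
      h.eq]
  rw [this]
  exact hB.conjTranspose_mul_mul_same (mulVec_injective_iff_isUnit.mpr hA.isUnit_sqrt)

theorem PosDef.sqrt_inv_mul_mul_sqrt_inv (hA : A.PosDef) (h : Commute A B) :
    (CFC.sqrt A)⁻¹ * B * (CFC.sqrt A)⁻¹ = B * A⁻¹ := by
  rw [(commute_inv_right (commute_sqrt_left h).symm).symm.eq, mul_assoc, ← mul_inv_rev,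
    CFC.sqrt_mul_sqrt_self A hA.posSemidef.nonneg]

theorem PosDef.one_sub_mul_inv (hab : (1 - A - B).PosDef) (hB : (1 - B).PosDef)
    (h : Commute A B) : (1 - A * (1 - B)⁻¹).PosDef := by
  rw [show 1 - A * (1 - B)⁻¹ = (1 - B - A) * (1 - B)⁻¹ by
    rw [sub_mul, mul_nonsing_inv _ hB.det_pos.ne'.isUnit]]
  exact (sub_right_comm 1 A B ▸ hab).mul_of_commute hB.inv
    (commute_inv_right ((Commute.refl _).sub_left ((Commute.one_right A).sub_right h)))

end Matrix

theorem msqrt_eq_sqrt {n : ℕ} {X : Matrix (Fin n) (Fin n) ℝ} (hX : X.PosSemidef) :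
    msqrt X = CFC.sqrt X := by
  rw [msqrt, dif_pos hX, CFC.sqrt_eq_cfc, cfc_nnreal_eq_real _ X, hX.1.cfc_eq]
  simp [IsHermitian.cfc, Function.comp_def, max_eq_left (hX.eigenvalues_nonneg _)]

section LfEquation

variable {n : ℕ}

def SatisfiesLfEquation (f : Matrix (Fin n) (Fin n) ℝ → ℝ) : Prop :=
  ∀ X Y : Matrix (Fin n) (Fin n) ℝ, X.PosDef → Y.PosDef → (1 - X - Y).PosDef →
    f (1 - X) + f ((msqrt (1 - X))⁻¹ * Y * (msqrt (1 - X))⁻¹) =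
      f Y + f (1 - (msqrt (1 - Y))⁻¹ * X * (msqrt (1 - Y))⁻¹)

namespace SatisfiesLfEquation

variable {f : Matrix (Fin n) (Fin n) ℝ → ℝ} {X Y u v a b : Matrix (Fin n) (Fin n) ℝ}

theorem add_eq_add_of_commute (hf : SatisfiesLfEquation f) (hX : X.PosDef) (hY : Y.PosDef)
    (hXY : (1 - X - Y).PosDef) (h : Commute X Y) :
    f (1 - X) + f (Y * (1 - X)⁻¹) = f Y + f (1 - X * (1 - Y)⁻¹) := by
  have h1X : (1 - X).PosDef := by simpa using hXY.add hY
  have h1Y : (1 - Y).PosDef := by convert hXY.add hX using 1; abel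
  have := hf X Y hX hY hXY
  rwa [msqrt_eq_sqrt h1X.posSemidef, msqrt_eq_sqrt h1Y.posSemidef,
    h1X.sqrt_inv_mul_mul_sqrt_inv ((Commute.one_left Y).sub_left h),
    h1Y.sqrt_inv_mul_mul_sqrt_inv ((Commute.one_left X).sub_left h.symm)] at this

theorem apply_one_sub_mul_inv_eq (hf : SatisfiesLfEquation f) (hu : u.PosDef) (hv : v.PosDef)
    (h1u : (1 - u).PosDef) (h1v : (1 - v).PosDef) (h : Commute u v) :
    f (1 - (1 - u) * (1 - u * v)⁻¹) = f (1 - (1 - v) * (1 - u * v)⁻¹) := by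
  have e1 := hf.add_eq_add_of_commute h1u (hv.mul_of_commute hu h.symm)
    (by
      rw [sub_sub_cancel, ← one_sub_mul]
      exact h1v.mul_of_commute hu ((Commute.one_left u).sub_left h.symm))
    ((Commute.one_left _).sub_left (h.mul_right (.refl u)))
  have e2 := hf.add_eq_add_of_commute h1v (hu.mul_of_commute hv h)
    (by
      rw [sub_sub_cancel, ← one_sub_mul]
      exact h1u.mul_of_commute hv ((Commute.one_left v).sub_left h))
    ((Commute.one_left _).sub_left (h.symm.mul_right (.refl v)))
  rw [sub_sub_cancel, mul_nonsing_inv_cancel_right _ _ hu.det_pos.ne'.isUnit, ← h.eq] at e1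
  rw [sub_sub_cancel, mul_nonsing_inv_cancel_right _ _ hv.det_pos.ne'.isUnit] at e2
  linarith

theorem eq_of_commute (hf : SatisfiesLfEquation f) (ha : a.PosDef) (hb : b.PosDef)
    (hab : (1 - a - b).PosDef) (h : Commute a b) : f a = f b := by
  have hA : (1 - a).PosDef := by simpa using hab.add hb
  have hB : (1 - b).PosDef := by convert hab.add ha using 1; abel
  have caA : Commute a (1 - a)⁻¹ := commute_inv_right ((Commute.one_right a).sub_right (.refl a))
  have cbB : Commute b (1 - b)⁻¹ := commute_inv_right ((Commute.one_right b).sub_right (.refl b))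
  have caB : Commute a (1 - b)⁻¹ := commute_inv_right ((Commute.one_right a).sub_right h)
  have cbA : Commute b (1 - a)⁻¹ := commute_inv_right ((Commute.one_right b).sub_right h.symm)
  have cBA : Commute (1 - b)⁻¹ (1 - a)⁻¹ :=
    (commute_inv_right (commute_inv_right
      ((Commute.one_right _).sub_right ((Commute.one_left a).sub_left h.symm))).symm).symm
  have huv : Commute (a * (1 - b)⁻¹) (b * (1 - a)⁻¹) :=
    (h.mul_right caA).mul_left (cbB.symm.mul_right cBA)
  have hu : (a * (1 - b)⁻¹).PosDef := ha.mul_of_commute hB.inv caB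
  have hv : (b * (1 - a)⁻¹).PosDef := hb.mul_of_commute hA.inv cbA
  have h1u : (1 - a * (1 - b)⁻¹).PosDef := hab.one_sub_mul_inv hB h
  have h1v : (1 - b * (1 - a)⁻¹).PosDef := (sub_right_comm 1 a b ▸ hab).one_sub_mul_inv hA h.symm
  have h1uv : (1 - a * (1 - b)⁻¹ * (b * (1 - a)⁻¹)).PosDef := by
    rw [show 1 - a * (1 - b)⁻¹ * (b * (1 - a)⁻¹) =
      (1 - a * (1 - b)⁻¹) + a * (1 - b)⁻¹ * (1 - b * (1 - a)⁻¹) by noncomm_ring]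
    exact h1u.add (hu.mul_of_commute h1v ((Commute.one_right _).sub_right huv))
  have key := hf.apply_one_sub_mul_inv_eq hu hv h1u h1v huv
  rwa [one_sub_mul_inv_eq_mul h.symm hB.det_pos.ne'.isUnit hA.det_pos.ne'.isUnit,
    one_sub_mul_inv_eq_mul h hA.det_pos.ne'.isUnit hB.det_pos.ne'.isUnit, ← huv.eq,
    mul_nonsing_inv_cancel_right _ _ h1uv.det_pos.ne'.isUnit,
    mul_nonsing_inv_cancel_right _ _ h1uv.det_pos.ne'.isUnit, sub_sub_cancel,
    sub_sub_cancel] at key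

end SatisfiesLfEquation

end LfEquation

theorem lemma_lfconst_matrix_general (n : ℕ)
    (f : Matrix (Fin n) (Fin n) ℝ → ℝ)
    (heq : ∀ X Y : Matrix (Fin n) (Fin n) ℝ, X.PosDef → Y.PosDef →
      (1 - X - Y).PosDef →
      f (1 - X) + f ((msqrt (1 - X))⁻¹ * Y * (msqrt (1 - X))⁻¹) =
        f Y + f (1 - (msqrt (1 - Y))⁻¹ * X * (msqrt (1 - Y))⁻¹)) :
    ∃ c : ℝ, ∀ X : Matrix (Fin n) (Fin n) ℝ, X.PosDef → (1 - X).PosDef → f X = c := by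
  refine ⟨f ((4⁻¹ : ℝ) • 1), fun X hX h1X => ?_⟩
  have hY : ((2⁻¹ : ℝ) • (1 - X)).PosDef := h1X.smul (by norm_num)
  have hZ : ((4⁻¹ : ℝ) • (1 : Matrix (Fin n) (Fin n) ℝ)).PosDef := PosDef.one.smul (by norm_num)
  have hXY : (1 - X - (2⁻¹ : ℝ) • (1 - X)).PosDef := by convert hY using 1; module
  have hYZ : (1 - (2⁻¹ : ℝ) • (1 - X) - (4⁻¹ : ℝ) • 1).PosDef := by
    convert hZ.add (hX.smul (by norm_num : (0 : ℝ) < 2⁻¹)) using 1; module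
  calc f X = f ((2⁻¹ : ℝ) • (1 - X)) :=
        SatisfiesLfEquation.eq_of_commute heq hX hY hXY
          (((Commute.one_right X).sub_right (.refl X)).smul_right _)
    _ = f ((4⁻¹ : ℝ) • 1) :=
        SatisfiesLfEquation.eq_of_commute heq hY hZ hYZ ((Commute.one_right _).smul_right _)

/-- Lemma lfconst of the paper on the cone of positive definite real symmetric
matrices with multiplication algorithm `w₁(X) = P(X^{1/2})`. -/
theorem lemma_lfconst_matrix (n : ℕ)
    (f : Matrix (Fin n) (Fin n) ℝ → ℝ)
    (hf : ContinuousOn f {X | X.PosDef ∧ (1 - X).PosDef})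
    (heq : ∀ X Y : Matrix (Fin n) (Fin n) ℝ, X.PosDef → Y.PosDef →
      (1 - X - Y).PosDef →
      f (1 - X) + f ((msqrt (1 - X))⁻¹ * Y * (msqrt (1 - X))⁻¹) =
        f Y + f (1 - (msqrt (1 - Y))⁻¹ * X * (msqrt (1 - Y))⁻¹)) :
    ∃ c : ℝ, ∀ X : Matrix (Fin n) (Fin n) ℝ, X.PosDef → (1 - X).PosDef → f X = c :=
  lemma_lfconst_matrix_general n f heq
end
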